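/- arXiv:2008.01413 — 4 statements merged into one kernel-verified Lean document; each statement's English description precedes it below -/
import Mathlib

section
/- The language L(a,b) = {w ∈ {a,b}* : |w|_a = |w|_b} is REG-measurable with measure 0: for every ε > 0 there exist regular languages K, M with K ⊆ L(a,b) ⊆ M, δ_A(K) ≥ 0, and δ_A(M) ≤ ε. Equivalently, the regular upper density of L(a,b) equals 0. -/
open Filter Topology

/-- Number of words of `L` of length `n`. -/
noncomputable def wordCount {A : Type*} (L : Set (List A)) (n : ℕ) : ℕ :=
  Nat.card {w : List A // w ∈ L ∧ w.length = n}

/-- `L` has natural density `α`. -/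
def HasNatDensity {A : Type*} [Fintype A] (L : Set (List A)) (α : ℝ) : Prop :=
  Tendsto (fun n : ℕ => (wordCount L n : ℝ) / (Fintype.card A : ℝ) ^ n) atTop (nhds α)

/-- `L` has (Cesàro) density `α`. -/
def HasCesaroDensity {A : Type*} [Fintype A] (L : Set (List A)) (α : ℝ) : Prop :=
  Tendsto (fun n : ℕ =>
      (∑ k ∈ Finset.range n, (wordCount L k : ℝ) / (Fintype.card A : ℝ) ^ k) / n)
    atTop (nhds α)

/-- `L` is a regular language (accepted by a DFA with finitely many states). -/
def IsRegularLang {A : Type*} (L : Set (List A)) : Prop :=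
  ∃ (σ : Type) (_ : Fintype σ) (M : DFA A σ), ∀ w, w ∈ M.accepts ↔ w ∈ L

/-!
Count letters with weights in `ZMod m`: `a ↦ 1`, `b ↦ -1`. The words of total weight `0` form a
regular language containing every balanced word. Expanding the indicator of weight `0` in additive
characters, `m · #{w : |w| = n, weight w = 0} = ∑_ψ (ψ 1 + ψ (-1)) ^ n`. For odd `m`, every
nontrivial `ψ` has `ψ 1 ≠ ±1`, so `‖ψ 1 + ψ (-1)‖ < 2`; hence the language has natural (so also
Cesàro) density `1 / m`, which is as small as we like.
-/

open Filter Topology Finset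

lemma AddChar.map_sum_eq_prod {G M ι : Type*} [AddCommMonoid G] [CommMonoid M]
    (ψ : AddChar G M) (s : Finset ι) (f : ι → G) : ψ (∑ i ∈ s, f i) = ∏ i ∈ s, ψ (f i) :=
  map_prod ψ.toMonoidHom (fun i => Multiplicative.ofAdd (f i)) s

lemma Complex.norm_add_inv_lt_two {z : ℂ} (hz : ‖z‖ = 1) (hz2 : z ^ 2 ≠ 1) : ‖z + z⁻¹‖ < 2 := by
  have hz0 : z ≠ 0 := norm_ne_zero_iff.mp (hz ▸ one_ne_zero)
  have hzinv : ‖z⁻¹‖ = 1 := by rw [norm_inv, hz, inv_one]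
  have hne : z ≠ z⁻¹ := fun h => hz2 (by rw [sq]; nth_rw 2 [h]; exact mul_inv_cancel₀ hz0)
  calc ‖z + z⁻¹‖ < ‖z‖ + ‖z⁻¹‖ :=
        norm_add_lt_of_not_sameRay ((not_sameRay_iff_of_norm_eq (hz.trans hzinv.symm)).mpr hne)
    _ = 2 := by rw [hz, hzinv]; norm_num

lemma ZMod.norm_addChar_one_add_neg_one_lt_two {m : ℕ} (hm : Odd m) {ψ : AddChar (ZMod m) ℂ}
    (hψ : ψ ≠ 0) : ‖ψ 1 + ψ (-1)‖ < 2 := by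
  have : NeZero m := ⟨hm.pos.ne'⟩
  rw [AddChar.map_neg_eq_inv]
  refine Complex.norm_add_inv_lt_two (ψ.norm_apply 1) fun hsq => ?_
  have hpow : ψ 1 ^ m = 1 := by rw [← AddChar.map_nsmul_eq_pow, nsmul_one, ZMod.natCast_self,
    AddChar.map_zero_eq_one]
  have hone : ψ 1 ^ Nat.gcd 2 m = 1 := pow_gcd_eq_one.mpr ⟨hsq, hpow⟩
  rw [Nat.coprime_two_left.mpr hm, pow_one] at hone
  exact (AddChar.zmod_char_ne_one_iff m ψ).mp hψ hone

lemma isRegularLang_setOf_sum_map_mem {A : Type*} {G : Type} [AddMonoid G] [Fintype G] (s : A → G)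
    (S : Set G) : IsRegularLang {w : List A | (w.map s).sum ∈ S} := by
  refine ⟨G, inferInstance, ⟨fun g c => g + s c, 0, S⟩, fun w => ?_⟩
  suffices h : ∀ g, DFA.evalFrom ⟨fun g c => g + s c, 0, S⟩ g w = g + (w.map s).sum by
    simp [DFA.mem_accepts, DFA.eval, h]
  induction w with
  | nil => simp
  | cons c w ih => intro g; rw [DFA.evalFrom_cons, ih, List.map_cons, List.sum_cons, add_assoc]

lemma sum_map_indicator_sub_indicator {A R : Type*} [DecidableEq A] [Ring R] (a b : A)
    (w : List A) :
    (w.map fun c => (if c = a then 1 else 0 : R) - if c = b then 1 else 0).sum =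
      w.count a - w.count b := by
  induction w with
  | nil => simp
  | cons c w ih =>
    simp only [List.map_cons, List.sum_cons, ih, List.count_cons, beq_iff_eq]
    push_cast
    abel

section Words

variable {A : Type*} [Fintype A]

lemma wordCount_eq_card_filter (L : Set (List A)) [DecidablePred (· ∈ L)] (n : ℕ) :
    wordCount L n = #{x : Fin n → A | List.ofFn x ∈ L} := by
  rw [wordCount, ← Fintype.card_subtype, ← Nat.card_eq_fintype_card]
  refine Nat.card_congr <| (Equiv.subtypeEquivRight fun _ => and_comm).trans <|
    (Equiv.subtypeSubtypeEquivSubtypeInter (fun l : List A => l.length = n) (· ∈ L)).symm.trans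
    (Equiv.subtypeEquiv (Equiv.vectorEquivFin A n) fun v : List.Vector A n => ?_)
  change v.toList ∈ L ↔ List.ofFn v.get ∈ L
  rw [← List.Vector.toList_ofFn, List.Vector.ofFn_get]

lemma HasNatDensity.hasCesaroDensity {L : Set (List A)} {α : ℝ} (h : HasNatDensity L α) :
    HasCesaroDensity L α :=
  h.cesaro.congr fun n => by rw [inv_mul_eq_div]

lemma hasNatDensity_empty : HasNatDensity (∅ : Set (List A)) 0 := by
  simp [HasNatDensity, wordCount]

variable {G : Type*} [AddCommGroup G] [Fintype G]

theorem card_mul_wordCount_sum_map_eq_zero (s : A → G) (n : ℕ) :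
    (Fintype.card G : ℂ) * wordCount {w | (w.map s).sum = 0} n =
      ∑ ψ : AddChar G ℂ, (∑ c, ψ (s c)) ^ n := by
  classical
  calc (Fintype.card G : ℂ) * wordCount {w | (w.map s).sum = 0} n
      = ∑ x : Fin n → A, if ∑ i, s (x i) = 0 then (Fintype.card G : ℂ) else 0 := by
        rw [wordCount_eq_card_filter, sum_ite, sum_const_zero, add_zero, sum_const, nsmul_eq_mul,
          mul_comm]
        simp [List.map_ofFn, List.sum_ofFn]
    _ = ∑ x : Fin n → A, ∑ ψ : AddChar G ℂ, ∏ i, ψ (s (x i)) := by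
        simp only [← AddChar.map_sum_eq_prod, AddChar.sum_apply_eq_ite]
    _ = ∑ ψ : AddChar G ℂ, (∑ c, ψ (s c)) ^ n := by
        rw [sum_comm]
        simp only [Fintype.sum_pow]

theorem hasNatDensity_sum_map_eq_zero [Nonempty A] (s : A → G)
    (hs : ∀ ψ : AddChar G ℂ, ψ ≠ 0 → ‖∑ c, ψ (s c)‖ < Fintype.card A) :
    HasNatDensity {w | (w.map s).sum = 0} (Fintype.card G)⁻¹ := by
  classical
  have hA : (Fintype.card A : ℂ) ≠ 0 := Nat.cast_ne_zero.mpr Fintype.card_ne_zero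
  set μ : AddChar G ℂ → ℂ := fun ψ => (∑ c, ψ (s c)) / Fintype.card A
  have hμ : ∀ n, ((wordCount {w | (w.map s).sum = 0} n / Fintype.card A ^ n : ℝ) : ℂ) =
      (Fintype.card G : ℂ)⁻¹ * ∑ ψ, μ ψ ^ n := by
    intro n
    simp only [μ, div_pow, ← sum_div, ← card_mul_wordCount_sum_map_eq_zero]
    push_cast
    field_simp
  have hlim : Tendsto (fun n => ∑ ψ, μ ψ ^ n) atTop
      (𝓝 (∑ ψ : AddChar G ℂ, if ψ = 0 then (1 : ℂ) else 0)) :=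
    tendsto_finsetSum _ fun ψ _ => by
      split_ifs with hψ
      · have h1 : μ ψ = 1 := by simp [μ, hψ, hA]
        rw [h1]
        exact tendsto_const_nhds.congr fun n => (one_pow n).symm
      · refine tendsto_pow_atTop_nhds_zero_of_norm_lt_one ?_
        rw [norm_div, Complex.norm_natCast, div_lt_one (by positivity)]
        exact hs ψ hψ
  rw [HasNatDensity, ← tendsto_ofReal_iff]
  simpa [hμ] using hlim.const_mul (Fintype.card G : ℂ)⁻¹

end Words

/-- The language `{w : |w|_a = |w|_b}` is `REG`-measurable with measure `0`:
it has regular subsets of density `0` and regular supersets of arbitrarily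
small density. -/
theorem stmt10 {A : Type*} [Fintype A] [DecidableEq A] (a b : A) (hab : a ≠ b)
    (hcard : Fintype.card A = 2) :
    ∀ ε : ℝ, 0 < ε →
      (∃ K : Set (List A), IsRegularLang K ∧ K ⊆ {w | w.count a = w.count b} ∧
        ∃ α : ℝ, HasCesaroDensity K α ∧ 0 ≤ α) ∧
      (∃ M : Set (List A), IsRegularLang M ∧ {w : List A | w.count a = w.count b} ⊆ M ∧
        ∃ β : ℝ, HasCesaroDensity M β ∧ β ≤ ε) := by
  intro ε hε
  obtain ⟨N, hN⟩ := exists_nat_one_div_lt hε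
  have hm : Odd (2 * N + 1) := odd_two_mul_add_one N
  set s : A → ZMod (2 * N + 1) := fun c => (if c = a then 1 else 0) - if c = b then 1 else 0
  have hbalanced : {w : List A | w.count a = w.count b} ⊆ {w | (w.map s).sum = 0} :=
    fun w (hw : w.count a = w.count b) => by simp [s, sum_map_indicator_sub_indicator, hw]
  have huniv : (univ : Finset A) = {a, b} :=
    (eq_univ_of_card _ (by rw [card_pair hab, hcard])).symm
  have : Nonempty A := ⟨a⟩
  have hdensity := hasNatDensity_sum_map_eq_zero s fun ψ hψ => by
    simpa [huniv, sum_pair hab, hcard, s, hab, hab.symm] using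
      ZMod.norm_addChar_one_add_neg_one_lt_two hm hψ
  refine ⟨⟨∅, ?_, Set.empty_subset _, 0, hasNatDensity_empty.hasCesaroDensity, le_rfl⟩,
    ⟨_, isRegularLang_setOf_sum_map_mem s {0}, hbalanced, _, hdensity.hasCesaroDensity, ?_⟩⟩
  · simpa using isRegularLang_setOf_sum_map_mem s ∅
  · calc ((Fintype.card (ZMod (2 * N + 1)) : ℕ) : ℝ)⁻¹ ≤ 1 / (N + 1) := by
          rw [ZMod.card, one_div]
          gcongr
          push_cast
          linarith
      _ ≤ ε := hN.le
end

section
/- For the Goldstine language G, the set of all forbidden prefixes L_G = {u ∈ A* : uA*{b} ∩ (A* \ G) = ∅} satisfies |L_G ∩ A^n| = 2^n − 1 for every n ≥ 1; equivalently, the complement of L_G consists exactly of the prefixes of the infinite word a b aa b aaa b ⋯. -/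
open Filter Topology

/-- The Goldstine language `{a^{n₁} b ⋯ a^{n_p} b : p ≥ 1, ∃ i, n_i ≠ i}`. -/
def goldstine {A : Type*} (a b : A) : Set (List A) :=
  {w | ∃ l : List ℕ, l ≠ [] ∧
    w = (l.map fun n => List.replicate n a ++ [b]).flatten ∧
    ∃ i : Fin l.length, l.get i ≠ (i : ℕ) + 1}

/-- The set of forbidden prefixes of the complement of the Goldstine language:
`u` such that every word `u v b` lies in `G`. -/
def goldstinePrefixes {A : Type*} (a b : A) : Set (List A) :=
  {u | ∀ v : List A, u ++ v ++ [b] ∈ goldstine a b}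

/-! Over the alphabet `{a, b}` every word ending in `b` factors uniquely into blocks `aⁿ b`, and
such a product `a^{n₁} b ⋯ a^{n_p} b` lies outside `G` exactly when `nᵢ = i` for all `i`.
So `u` is not a forbidden prefix iff some `u v b` equals `ab aab ⋯ a^p b`, i.e. iff `u` is a
prefix of the infinite word `ab aab aaab ⋯`; for each length there is exactly one such `u`. -/

namespace Goldstine

variable {A : Type*} {a b : A}

def blocks (a b : A) (l : List ℕ) : List A :=
  (l.map fun n => List.replicate n a ++ [b]).flatten

def ladder (a b : A) (N : ℕ) : List A :=
  ((List.range N).map fun i => List.replicate (i + 1) a ++ [b]).flatten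

@[simp]
lemma blocks_nil : blocks a b [] = [] := rfl

@[simp]
lemma blocks_cons (n : ℕ) (l : List ℕ) :
    blocks a b (n :: l) = List.replicate n a ++ b :: blocks a b l := by
  simp [blocks]

lemma ladder_eq_blocks (N : ℕ) : ladder a b N = blocks a b ((List.range N).map (· + 1)) := by
  simp [ladder, blocks, Function.comp_def]

lemma ladder_succ (N : ℕ) :
    ladder a b (N + 1) = ladder a b N ++ (List.replicate (N + 1) a ++ [b]) := by
  simp [ladder, List.range_succ]

lemma ladder_prefix_ladder {N M : ℕ} (h : N ≤ M) : ladder a b N <+: ladder a b M := by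
  induction M, h using Nat.le_induction with
  | base => exact List.prefix_rfl
  | succ M _ ih => exact ih.trans (ladder_succ (a := a) (b := b) M ▸ List.prefix_append _ _)

lemma le_length_ladder (N : ℕ) : N ≤ (ladder a b N).length := by
  induction N with
  | zero => exact Nat.zero_le _
  | succ N ih => simp only [ladder_succ, List.length_append, List.length_replicate]; omega

lemma replicate_append_cons_inj (hab : a ≠ b) {n m : ℕ} {s t : List A}
    (h : List.replicate n a ++ b :: s = List.replicate m a ++ b :: t) : n = m ∧ s = t := by
  induction n generalizing m with
  | zero => cases m <;> simp_all [List.replicate_succ, hab.symm]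
  | succ n ih =>
    cases m with
    | zero => simp_all [List.replicate_succ]
    | succ m => simpa using ih (by simpa [List.replicate_succ] using h)

lemma blocks_injective (hab : a ≠ b) : Function.Injective (blocks a b) := by
  intro l l' h
  induction l generalizing l' with
  | nil => cases l' <;> simp_all
  | cons n l ih =>
    cases l' with
    | nil => simp at h
    | cons m l' =>
      obtain ⟨rfl, h'⟩ := replicate_append_cons_inj hab (by simpa using h)
      rw [ih h']

lemma exists_blocks_eq_append_singleton (hAB : ∀ c, c = a ∨ c = b) (u : List A) :
    ∃ l ≠ [], blocks a b l = u ++ [b] := by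
  induction u with
  | nil => exact ⟨[0], by simp, by simp⟩
  | cons c u ih =>
    obtain ⟨_ | ⟨n, l⟩, hl, h⟩ := ih
    · exact absurd rfl hl
    rcases hAB c with rfl | rfl
    · exact ⟨(n + 1) :: l, by simp, by simpa [List.replicate_succ] using h⟩
    · exact ⟨0 :: n :: l, by simp, by simpa using h⟩

lemma eq_map_range_succ_iff (l : List ℕ) :
    l = (List.range l.length).map (· + 1) ↔ ∀ i : Fin l.length, l.get i = i + 1 := by
  simp [List.ext_get_iff, Fin.forall_iff]

lemma blocks_mem_goldstine_iff (hab : a ≠ b) {l : List ℕ} (hl : l ≠ []) :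
    blocks a b l ∈ goldstine a b ↔ l ≠ (List.range l.length).map (· + 1) := by
  rw [ne_eq, eq_map_range_succ_iff, not_forall]
  constructor
  · rintro ⟨l', -, h, hi⟩
    obtain rfl := blocks_injective hab h
    exact hi
  · exact fun hi => ⟨l, hl, rfl, hi⟩

lemma ladder_succ_notMem_goldstine (hab : a ≠ b) (N : ℕ) :
    ladder a b (N + 1) ∉ goldstine a b := by
  rw [ladder_eq_blocks, blocks_mem_goldstine_iff hab (by simp [List.range_succ])]
  simp

theorem notMem_goldstinePrefixes_iff (hab : a ≠ b) (hAB : ∀ c, c = a ∨ c = b) {u : List A} :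
    u ∉ goldstinePrefixes a b ↔ ∃ N, u <+: ladder a b N := by
  simp only [goldstinePrefixes, Set.mem_ofPred_eq, not_forall]
  constructor
  · rintro ⟨v, hv⟩
    obtain ⟨l, hl, hlv⟩ := exists_blocks_eq_append_singleton hAB (u ++ v)
    rw [← hlv, blocks_mem_goldstine_iff hab hl, not_not] at hv
    refine ⟨l.length, v ++ [b], ?_⟩
    rw [ladder_eq_blocks, ← hv, hlv, List.append_assoc]
  · rintro ⟨N, s, hs⟩
    refine ⟨s ++ List.replicate (N + 1) a, ?_⟩
    rw [← List.append_assoc, hs, List.append_assoc, ← ladder_succ]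
    exact ladder_succ_notMem_goldstine hab N

lemma exists_prefix_ladder_iff (w : List A) :
    (∃ N, w <+: ladder a b N) ↔ w = (ladder a b w.length).take w.length := by
  constructor
  · rintro ⟨N, hN⟩
    have hM : (ladder a b w.length).take w.length <+: ladder a b (max N w.length) :=
      (List.take_prefix _ _).trans (ladder_prefix_ladder (le_max_right _ _))
    have hlen : w.length = ((ladder a b w.length).take w.length).length := by
      simp [le_length_ladder]
    exact (List.prefix_of_prefix_length_le
      (hN.trans (ladder_prefix_ladder (le_max_left _ _))) hM hlen.le).eq_of_length hlen
  · exact fun h => ⟨w.length, List.prefix_iff_eq_take.2 h⟩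

end Goldstine

lemma eq_or_eq_of_card_eq_two {A : Type*} [Fintype A] {a b : A} (hab : a ≠ b)
    (hcard : Fintype.card A = 2) (c : A) : c = a ∨ c = b := by
  have hunique := (Nat.card_eq_two_iff' a).1 (by rwa [Nat.card_eq_fintype_card])
  by_contra! h
  exact h.2 (hunique.unique h.1 hab.symm)

lemma wordCount_eq_card_pow_sub_one {A : Type*} [Fintype A] {L : Set (List A)} {n : ℕ}
    {t : List A} (ht : t.length = n) (hL : ∀ w : List A, w.length = n → (w ∉ L ↔ w = t)) :
    wordCount L n = Fintype.card A ^ n - 1 := by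
  have hset : {w : List A | w ∈ L ∧ w.length = n} = {w | w.length = n} \ {t} := by
    ext w
    simp only [Set.mem_ofPred_eq, Set.mem_sdiff, Set.mem_singleton_iff]
    constructor
    · exact fun ⟨hw, hlen⟩ => ⟨hlen, fun h => (hL w hlen).2 h hw⟩
    · exact fun ⟨hlen, hne⟩ => ⟨not_not.1 (mt (hL w hlen).1 hne), hlen⟩
  have hall : {w : List A | w.length = n}.ncard = Fintype.card A ^ n := by
    rw [← Nat.card_coe_set_eq]
    change Nat.card (List.Vector A n) = _
    rw [Nat.card_eq_fintype_card, card_vector]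
  change Nat.card {w : List A | w ∈ L ∧ w.length = n} = _
  have ht' : t ∈ {w : List A | w.length = n} := ht
  rw [Nat.card_coe_set_eq, hset, Set.ncard_sdiff_singleton_of_mem ht', hall]

/-- `|L_G ∩ A^n| = 2^n - 1` for `n ≥ 1`; equivalently, the complement of `L_G`
consists exactly of the prefixes of the infinite word `ab aab aaab ⋯`. -/
theorem stmt13 {A : Type*} [Fintype A] (a b : A) (hab : a ≠ b)
    (hcard : Fintype.card A = 2) :
    (∀ n : ℕ, 1 ≤ n → wordCount (goldstinePrefixes a b) n = 2 ^ n - 1) ∧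
    (∀ u : List A, u ∉ goldstinePrefixes a b ↔
      ∃ N : ℕ, u <+: ((List.range N).map fun i => List.replicate (i + 1) a ++ [b]).flatten) := by
  have hAB := eq_or_eq_of_card_eq_two hab hcard
  refine ⟨fun n _ => ?_, fun u => Goldstine.notMem_goldstinePrefixes_iff hab hAB⟩
  rw [← hcard]
  refine wordCount_eq_card_pow_sub_one (t := (Goldstine.ladder a b n).take n)
    (by simp [Goldstine.le_length_ladder]) fun w hw => ?_
  rw [Goldstine.notMem_goldstinePrefixes_iff hab hAB, Goldstine.exists_prefix_ladder_iff, hw]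
end

section
/- The set Q_A of primitive words over an alphabet A with |A| ≥ 2 has natural density 1; equivalently, the set of non-primitive (imprimitive) words has natural density 0, since |complement(Q_A) ∩ A^n| ≤ 2√n · |A|^{⌊n/2⌋+1}. -/
open Filter Topology

/-- A word is primitive if it is nonempty and not a power of any word other
than itself. -/
def Primitive {A : Type*} (w : List A) : Prop :=
  w ≠ [] ∧ ∀ (u : List A) (n : ℕ), w = (List.replicate n u).flatten → u = w

/-!
A non-primitive word `w` of length `n ≥ 1` is a power `u ^ k` with `k ≥ 2`, so it is
determined by a root `u` of length at most `n / 2`. Hence there are fewer than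
`|A| ^ (n / 2 + 1)` such words, and their proportion `|A| ^ (n / 2 + 1 - n)` tends to `0`.
-/

section Words

variable {A : Type*}

lemma wordCount_eq_ncard (L : Set (List A)) (n : ℕ) :
    wordCount L n = (L ∩ {w | w.length = n}).ncard :=
  rfl

lemma exists_short_root_of_not_primitive {w : List A} (hw : w ≠ []) (hprim : ¬ Primitive w) :
    ∃ u : List A, 2 * u.length ≤ w.length ∧
      w = (List.replicate (w.length / u.length) u).flatten := by
  simp only [Primitive, ne_eq, hw, not_false_eq_true, true_and, not_forall] at hprim
  obtain ⟨u, k, hrep, hne⟩ := hprim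
  have hlen : w.length = k * u.length := by
    simp [hrep, List.sum_replicate]
  have hk : 2 ≤ k := by
    rcases k with _ | _ | k
    · exact absurd (by simpa using hrep) hw
    · exact absurd (by simpa using hrep.symm) hne
    · omega
  have hu : 0 < u.length :=
    Nat.pos_of_ne_zero fun h => hw (List.length_eq_zero_iff.mp (by rw [hlen, h, mul_zero]))
  refine ⟨u, ?_, ?_⟩
  · rw [hlen]
    exact Nat.mul_le_mul_right _ hk
  · rwa [hlen, Nat.mul_div_cancel _ hu]

section Counting

variable [Fintype A]

lemma ncard_length_eq (n : ℕ) : {w : List A | w.length = n}.ncard = Fintype.card A ^ n := by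
  rw [← Nat.card_coe_set_eq]
  exact (Nat.card_eq_fintype_card (α := List.Vector A n)).trans (card_vector n)

lemma ncard_length_le_lt (hA : 2 ≤ Fintype.card A) (m : ℕ) :
    {w : List A | w.length ≤ m}.ncard < Fintype.card A ^ (m + 1) := by
  have hunion :
      {w : List A | w.length ≤ m} = ⋃ j ∈ Finset.range (m + 1), {w | w.length = j} := by
    ext w
    simp
  calc {w : List A | w.length ≤ m}.ncard
      ≤ ∑ j ∈ Finset.range (m + 1), {w : List A | w.length = j}.ncard := by
        rw [hunion]
        exact Finset.set_ncard_biUnion_le _ _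
    _ = ∑ j ∈ Finset.range (m + 1), Fintype.card A ^ j := by simp only [ncard_length_eq]
    _ < Fintype.card A ^ (m + 1) := Nat.geomSum_lt hA fun j hj => Finset.mem_range.mp hj

lemma wordCount_add_wordCount_compl (L : Set (List A)) (n : ℕ) :
    wordCount L n + wordCount Lᶜ n = Fintype.card A ^ n := by
  rw [wordCount_eq_ncard, wordCount_eq_ncard, ← ncard_length_eq n, ← Set.sdiff_eq_compl_inter,
    Set.inter_comm]
  exact Set.ncard_inter_add_ncard_sdiff_eq_ncard _ _ (List.finite_length_eq A n)

theorem HasNatDensity.of_compl [Nonempty A] {L : Set (List A)} (h : HasNatDensity Lᶜ 0) :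
    HasNatDensity L 1 := by
  have hsplit : ∀ n : ℕ, (wordCount L n : ℝ) / (Fintype.card A : ℝ) ^ n
      = 1 - (wordCount Lᶜ n : ℝ) / (Fintype.card A : ℝ) ^ n := by
    intro n
    have hpos : (0 : ℝ) < (Fintype.card A : ℝ) ^ n := by positivity
    have hsum : (wordCount L n : ℝ) + wordCount Lᶜ n = (Fintype.card A : ℝ) ^ n := by
      exact_mod_cast wordCount_add_wordCount_compl L n
    rw [eq_sub_iff_add_eq, ← add_div, hsum, div_self hpos.ne']
  unfold HasNatDensity
  simpa only [hsplit, sub_zero] using (tendsto_const_nhds (x := (1 : ℝ))).sub h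

lemma wordCount_compl_primitive_lt (hA : 2 ≤ Fintype.card A) {n : ℕ} (hn : n ≠ 0) :
    wordCount {w : List A | Primitive w}ᶜ n < Fintype.card A ^ (n / 2 + 1) := by
  set power : List A → List A := fun u => (List.replicate (n / u.length) u).flatten
  have hsub : {w : List A | Primitive w}ᶜ ∩ {w | w.length = n}
      ⊆ power '' {u | u.length ≤ n / 2} := by
    rintro w ⟨hprim, rfl⟩
    have hw : w ≠ [] := List.ne_nil_of_length_pos (Nat.pos_of_ne_zero hn)
    obtain ⟨u, hu, hrep⟩ := exists_short_root_of_not_primitive hw hprim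
    exact ⟨u, by simp only [Set.mem_ofPred_eq]; omega, hrep.symm⟩
  have hfin := List.finite_length_le A (n / 2)
  calc wordCount {w : List A | Primitive w}ᶜ n
      ≤ (power '' {u | u.length ≤ n / 2}).ncard := Set.ncard_le_ncard hsub (hfin.image _)
    _ ≤ {u : List A | u.length ≤ n / 2}.ncard := Set.ncard_image_le hfin
    _ < Fintype.card A ^ (n / 2 + 1) := ncard_length_le_lt hA _

end Counting

end Words

lemma tendsto_pow_half_succ_div_pow {c : ℝ} (hc : 1 < c) :
    Tendsto (fun n : ℕ => c ^ (n / 2 + 1) / c ^ n) atTop (𝓝 0) := by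
  have hc0 : c ≠ 0 := by positivity
  have hrewrite : ∀ n : ℕ, c ^ (n / 2 + 1) / c ^ n = c * c⁻¹ ^ (n - n / 2) := by
    intro n
    rw [inv_pow, pow_sub₀ c hc0 (Nat.div_le_self n 2), pow_succ]
    field_simp
  have hexp : Tendsto (fun n : ℕ => n - n / 2) atTop atTop :=
    tendsto_atTop_atTop.mpr fun b => ⟨2 * b, fun n hn => by omega⟩
  have hgeom := (tendsto_pow_atTop_nhds_zero_of_lt_one (inv_nonneg.mpr (by positivity))
    (inv_lt_one_of_one_lt₀ hc)).comp hexp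
  simpa only [hrewrite, mul_zero, Function.comp_def] using hgeom.const_mul c

/-- The set of primitive words has natural density `1`. -/
theorem stmt18 {A : Type*} [Fintype A] (hA : 2 ≤ Fintype.card A) :
    HasNatDensity {w : List A | Primitive w} 1 := by
  have hc : (1 : ℝ) < Fintype.card A := by exact_mod_cast hA
  have : Nonempty A := Fintype.card_pos_iff.mp (by omega)
  refine HasNatDensity.of_compl <| squeeze_zero' (Eventually.of_forall fun n => by positivity) ?_
    (tendsto_pow_half_succ_div_pow hc)
  filter_upwards [eventually_ne_atTop 0] with n hn
  gcongr
  exact_mod_cast (wordCount_compl_primitive_lt hA hn).le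
end

section
/- Every regular language L ⊆ A* with positive density (equivalently, non-null) contains infinitely many non-primitive words; consequently the REG-lower-density of the set Q_A of primitive words is 0. -/
open Filter Topology

/-!
Let `M` be a DFA recognising `L`, and `v` a nonempty word whose action `q ↦ δ(q, v)` has an image
of minimal size. The words avoiding the factor `v` have natural density `0`, so a language of
positive density contains some `u` with factor `v`. The image of `δ(·, u)` is then minimal too, so
`δ(·, u)` permutes its own image; a power `m ≥ 1` of this permutation is the identity there, and
every `u^(km+1)` is accepted. These are infinitely many non-primitive words of `L`. Hence a regular
language of primitive words cannot have positive density, while `∅` has density `0`.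
-/

open Function Set List

theorem frequently_le_of_tendsto_cesaro {a : ℕ → ℝ} {α β : ℝ}
    (h : Tendsto (fun n : ℕ => (∑ k ∈ Finset.range n, a k) / n) atTop (𝓝 α)) (hβ : β < α) :
    ∃ᶠ n in atTop, β ≤ a n := by
  by_contra hfreq
  obtain ⟨K, hK⟩ := eventually_atTop.1 (not_frequently.1 hfreq)
  set C := ∑ k ∈ Finset.range K, a k - K * β
  have hle : ∀ n ≥ max K 1, (∑ k ∈ Finset.range n, a k) / n ≤ C / n + β := by
    intro n hn
    have hKn : K ≤ n := le_of_max_le_left hn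
    have hn0 : (0 : ℝ) < n := by exact_mod_cast le_of_max_le_right hn
    have htail := Finset.sum_le_card_nsmul (Finset.Ico K n) a β
      fun k hk => (not_le.1 (hK k (Finset.mem_Ico.1 hk).1)).le
    rw [Nat.card_Ico, nsmul_eq_mul, Nat.cast_sub hKn] at htail
    rw [div_add' _ _ _ hn0.ne', div_le_div_iff_of_pos_right hn0,
      ← Finset.sum_range_add_sum_Ico _ hKn]
    linarith
  have hlim : Tendsto (fun n : ℕ => C / n + β) atTop (𝓝 β) := by
    simpa using (tendsto_const_div_atTop_nhds_zero_nat C).add_const β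
  exact hβ.not_ge (le_of_tendsto_of_tendsto h hlim (eventually_atTop.2 ⟨max K 1, hle⟩))

theorem tendsto_div_pow_of_add_le_mul {a : ℕ → ℕ} {Q c l : ℕ} (hl : 0 < l) (hc : c < Q ^ l)
    (ha : ∀ n, a n ≤ Q ^ n) (hstep : ∀ n, a (n + l) ≤ a n * c) :
    Tendsto (fun n => (a n : ℝ) / Q ^ n) atTop (𝓝 0) := by
  have hQ : (0 : ℝ) < Q := by
    have : Q ≠ 0 := by rintro rfl; simp [hl.ne'] at hc
    exact_mod_cast Nat.pos_of_ne_zero this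
  have hiter : ∀ k r, a (r + k * l) ≤ Q ^ r * c ^ k := by
    intro k
    induction k with
    | zero => simpa using ha
    | succ k ih =>
      intro r
      calc a (r + (k + 1) * l) = a (r + k * l + l) := by ring_nf
        _ ≤ Q ^ r * c ^ k * c := (hstep _).trans (Nat.mul_le_mul_right c (ih r))
        _ = Q ^ r * c ^ (k + 1) := by ring
  set γ : ℝ := c / Q ^ l
  have hγ1 : γ < 1 := (div_lt_one (by positivity)).2 (by exact_mod_cast hc)
  have hbound : ∀ n, (a n : ℝ) / Q ^ n ≤ γ ^ (n / l) := by
    intro n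
    have hQn : (Q : ℝ) ^ n = Q ^ (n % l) * (Q ^ l) ^ (n / l) := by
      rw [← pow_mul, ← pow_add, Nat.mod_add_div]
    have han : (a n : ℝ) ≤ Q ^ (n % l) * c ^ (n / l) := by
      exact_mod_cast Nat.mod_add_div' n l ▸ hiter (n / l) (n % l)
    rw [div_le_iff₀ (by positivity), hQn, div_pow]
    field_simp
    linarith
  exact squeeze_zero (fun n => by positivity) hbound
    ((tendsto_pow_atTop_nhds_zero_of_lt_one (by positivity) hγ1).comp
      (Nat.tendsto_div_const_atTop hl.ne'))

section WordCount

variable {A : Type*}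

def wordsEquivVector (S : Set (List A)) (n : ℕ) :
    {w : List A // w ∈ S ∧ w.length = n} ≃ {v : List.Vector A n // v.toList ∈ S} where
  toFun w := ⟨⟨w.1, w.2.2⟩, w.2.1⟩
  invFun v := ⟨v.1.toList, v.2, v.1.2⟩
  left_inv _ := rfl
  right_inv _ := rfl

theorem wordCount_eq_card (S : Set (List A)) (n : ℕ) :
    wordCount S n = Nat.card {v : List.Vector A n // v.toList ∈ S} :=
  Nat.card_congr (wordsEquivVector S n)

variable [Fintype A]

instance (S : Set (List A)) (n : ℕ) : Finite {w : List A // w ∈ S ∧ w.length = n} :=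
  .of_equiv _ (wordsEquivVector S n).symm

theorem wordCount_le_pow (S : Set (List A)) (n : ℕ) : wordCount S n ≤ Fintype.card A ^ n := by
  rw [wordCount_eq_card, ← card_vector, ← Nat.card_eq_fintype_card]
  exact Finite.card_subtype_le _

theorem wordCount_lt_pow {S : Set (List A)} {w : List A} (hw : w ∉ S) :
    wordCount S w.length < Fintype.card A ^ w.length := by
  rw [wordCount_eq_card, ← card_vector, ← Nat.card_eq_fintype_card]
  exact Finite.card_subtype_lt (x := ⟨w, rfl⟩) hw

theorem wordCount_add_le {S S₁ S₂ : Set (List A)} (h : ∀ x y, x ++ y ∈ S → x ∈ S₁ ∧ y ∈ S₂)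
    (m n : ℕ) : wordCount S (m + n) ≤ wordCount S₁ m * wordCount S₂ n := by
  rw [wordCount, wordCount, wordCount, ← Nat.card_prod]
  refine Nat.card_le_card_of_injective
    (fun w => (⟨w.1.take m, ?_, ?_⟩, ⟨w.1.drop m, ?_, ?_⟩)) fun w w' hww' => ?_
  · exact (h _ _ (by rw [take_append_drop]; exact w.2.1)).1
  · simp [w.2.2]
  · exact (h _ _ (by rw [take_append_drop]; exact w.2.1)).2
  · simp [w.2.2]
  · simp only [Prod.mk.injEq, Subtype.mk.injEq] at hww'
    exact Subtype.ext (by rw [← take_append_drop m w.1, hww'.1, hww'.2, take_append_drop])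

theorem exists_mem_notMem_of_wordCount_lt {S T : Set (List A)} {n : ℕ}
    (h : wordCount S n < wordCount T n) : ∃ w ∈ T, w.length = n ∧ w ∉ S := by
  by_contra! hTS
  exact h.not_ge <| Nat.card_le_card_of_injective (fun w => ⟨w.1, hTS w.1 w.2.1 w.2.2, w.2.2⟩)
    fun _ _ hw => Subtype.ext (congrArg Subtype.val hw :)

theorem tendsto_wordCount_not_infix_div_pow {v : List A} (hv : v ≠ []) :
    Tendsto (fun n => (wordCount {w | ¬ v <:+: w} n : ℝ) / Fintype.card A ^ n) atTop (𝓝 0) := by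
  refine tendsto_div_pow_of_add_le_mul (length_pos_iff.2 hv)
    (wordCount_lt_pow (S := {v}ᶜ) (w := v) (by simp)) (wordCount_le_pow _)
    fun n => wordCount_add_le
      (fun x y (hxy : ¬ v <:+: x ++ y) => ⟨fun hx => hxy ?_, fun hy => hxy ?_⟩) n v.length
  · exact hx.trans (prefix_append x y).isInfix
  · rw [mem_singleton_iff.1 hy]
    exact (suffix_append x v).isInfix

variable {L : Set (List A)} {α : ℝ}

theorem nonempty_of_hasCesaroDensity (hL : HasCesaroDensity L α) (hα : 0 < α) : Nonempty A := by
  obtain ⟨n, hn, hn0⟩ := ((frequently_le_of_tendsto_cesaro hL (half_lt_self hα)).and_eventually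
    (eventually_gt_atTop 0)).exists
  by_contra hA
  rw [not_nonempty_iff, ← Fintype.card_eq_zero_iff] at hA
  rw [hA, Nat.cast_zero, zero_pow hn0.ne', div_zero] at hn
  linarith

theorem exists_mem_infix_of_hasCesaroDensity (hL : HasCesaroDensity L α) (hα : 0 < α)
    {v : List A} (hv : v ≠ []) : ∃ u ∈ L, v <:+: u := by
  obtain ⟨n, hLn, hvn⟩ := ((frequently_le_of_tendsto_cesaro hL (half_lt_self hα)).and_eventually
    ((tendsto_wordCount_not_infix_div_pow hv).eventually_lt_const (half_pos hα))).exists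
  have hlt : wordCount {w | ¬ v <:+: w} n < wordCount L n := by
    by_contra! hle
    exact (hvn.trans_le hLn).not_ge
      (div_le_div_of_nonneg_right (by exact_mod_cast hle) (by positivity))
  obtain ⟨u, huL, -, hu⟩ := exists_mem_notMem_of_wordCount_lt hlt
  exact ⟨u, huL, not_not.1 hu⟩

end WordCount

theorem Function.exists_pos_forall_isPeriodicPt_of_ncard_range_le {σ : Type*} [Finite σ]
    {f : σ → σ} (h : (range f).ncard ≤ (range (f ∘ f)).ncard) :
    ∃ m, 0 < m ∧ ∀ x ∈ range f, IsPeriodicPt f m x := by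
  have hmaps : MapsTo f (range f) (range f) := fun x _ => mem_range_self x
  have himage : f '' range f = range f :=
    eq_of_subset_of_ncard_le hmaps.image_subset (by rwa [← range_comp])
  have hinj : Injective (hmaps.restrict f _ _) :=
    Finite.injective_iff_surjective.2 (hmaps.restrict_surjective_iff.2 himage.ge)
  have := Fintype.ofFinite (range f)
  refine ⟨(Fintype.card (range f)).factorial, Nat.factorial_pos _, fun x hx => ?_⟩
  have hper := congrArg Subtype.val
    (isPeriodicPt_factorial_card_of_mem_periodicPts (hinj.mem_periodicPts ⟨x, hx⟩))
  rwa [hmaps.iterate_restrict] at hper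

namespace DFA

variable {α σ : Type*} (M : DFA α σ)

noncomputable def rank (w : List α) : ℕ := (range fun q => M.evalFrom q w).ncard

theorem range_evalFrom_append (x y : List α) :
    (range fun q => M.evalFrom q (x ++ y)) =
      (fun q => M.evalFrom q y) '' range fun q => M.evalFrom q x := by
  simp only [evalFrom_of_append, ← range_comp, Function.comp_def]

theorem evalFrom_flatten_replicate (u : List α) (n : ℕ) (q : σ) :
    M.evalFrom q (replicate n u).flatten = (fun q => M.evalFrom q u)^[n] q := by
  induction n generalizing q with
  | zero => rfl
  | succ n ih => rw [replicate_succ, flatten_cons, evalFrom_of_append, ih, iterate_succ_apply]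

theorem exists_forall_rank_le [Nonempty α] : ∃ v ≠ [], ∀ w ≠ [], M.rank v ≤ M.rank w := by
  classical
  have hex : ∃ r, ∃ w ≠ [], M.rank w = r := ⟨_, [Classical.arbitrary α], by simp, rfl⟩
  obtain ⟨v, hv, hvr⟩ := Nat.find_spec hex
  exact ⟨v, hv, fun w hw => hvr ▸ Nat.find_min' hex ⟨w, hw, rfl⟩⟩

variable [Finite σ]

theorem rank_append_le_left (x y : List α) : M.rank (x ++ y) ≤ M.rank x := by
  rw [rank, range_evalFrom_append]
  exact ncard_image_le (toFinite _)

theorem rank_append_le_right (x y : List α) : M.rank (x ++ y) ≤ M.rank y := by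
  refine ncard_le_ncard ?_ (toFinite _)
  rw [range_evalFrom_append]
  exact image_subset_range _ _

theorem rank_le_of_infix {v w : List α} (h : v <:+: w) : M.rank w ≤ M.rank v := by
  obtain ⟨s, t, rfl⟩ := h
  exact (M.rank_append_le_left _ t).trans (M.rank_append_le_right s v)

theorem exists_evalFrom_flatten_replicate_eq {u : List α} (h : M.rank u ≤ M.rank (u ++ u)) :
    ∃ m, 0 < m ∧ ∀ k q, M.evalFrom q (replicate (k * m + 1) u).flatten = M.evalFrom q u := by
  have hsq : (range fun q => M.evalFrom q (u ++ u)) =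
      range ((fun q => M.evalFrom q u) ∘ fun q => M.evalFrom q u) := by
    simp only [evalFrom_of_append, Function.comp_def]
  rw [rank, rank, hsq] at h
  obtain ⟨m, hm, hper⟩ := exists_pos_forall_isPeriodicPt_of_ncard_range_le h
  refine ⟨m, hm, fun k q => ?_⟩
  rw [evalFrom_flatten_replicate, iterate_succ_apply, mul_comm]
  exact (hper _ (mem_range_self q)).mul_const k

end DFA

section RegularLanguage

variable {A : Type*}

theorem length_flatten_replicate (u : List A) (n : ℕ) :
    (replicate n u).flatten.length = n * u.length := by
  simp [length_flatten]

theorem not_primitive_flatten_replicate {u : List A} (hu : u ≠ []) {n : ℕ} (hn : 2 ≤ n) :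
    ¬ Primitive (replicate n u).flatten := fun h => by
  have := congrArg length (h.2 u n rfl)
  rw [length_flatten_replicate] at this
  nlinarith [length_pos_iff.2 hu]

theorem infinite_setOf_not_primitive {L : Set (List A)} {u : List A} (hu : u ≠ []) {m : ℕ}
    (hm : 0 < m) (hL : ∀ k, (replicate (k * m + 1) u).flatten ∈ L) :
    {w | w ∈ L ∧ ¬ Primitive w}.Infinite := by
  refine infinite_of_injective_forall_mem (f := fun k => (replicate ((k + 1) * m + 1) u).flatten)
    (fun k k' h => ?_) fun k => ⟨hL _, not_primitive_flatten_replicate hu (by nlinarith)⟩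
  have hlen := congrArg length h
  simp only [length_flatten_replicate] at hlen
  have := Nat.eq_of_mul_eq_mul_right hm
    (Nat.succ_injective (Nat.eq_of_mul_eq_mul_right (length_pos_iff.2 hu) hlen))
  omega

theorem isRegularLang_empty : IsRegularLang (∅ : Set (List A)) :=
  ⟨Unit, inferInstance, ⟨fun _ _ => (), (), ∅⟩, fun _ => Iff.rfl⟩

variable [Fintype A]

theorem hasCesaroDensity_empty : HasCesaroDensity (∅ : Set (List A)) 0 := by
  simp [HasCesaroDensity, wordCount]

theorem IsRegularLang.exists_flatten_replicate_mem {L : Set (List A)} (hL : IsRegularLang L)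
    {α : ℝ} (hLα : HasCesaroDensity L α) (hα : 0 < α) :
    ∃ u ≠ [], ∃ m, 0 < m ∧ ∀ k, (replicate (k * m + 1) u).flatten ∈ L := by
  obtain ⟨σ, _, M, hM⟩ := hL
  have := nonempty_of_hasCesaroDensity hLα hα
  obtain ⟨v, hv, hmin⟩ := M.exists_forall_rank_le
  obtain ⟨u, huL, hvu⟩ := exists_mem_infix_of_hasCesaroDensity hLα hα hv
  have hu : u ≠ [] := fun h => hv (eq_nil_of_infix_nil (h ▸ hvu))
  obtain ⟨m, hm, hpow⟩ := M.exists_evalFrom_flatten_replicate_eq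
    ((M.rank_le_of_infix hvu).trans (hmin _ (append_ne_nil_of_left_ne_nil hu u)))
  refine ⟨u, hu, m, hm, fun k => ?_⟩
  rw [← hM, DFA.mem_accepts, DFA.eval, hpow]
  exact (hM u).2 huL

end RegularLanguage

theorem stmt19_general {A : Type*} [Fintype A] :
    (∀ L : Set (List A), IsRegularLang L →
      (∃ α : ℝ, HasCesaroDensity L α ∧ 0 < α) →
      {w : List A | w ∈ L ∧ ¬ Primitive w}.Infinite) ∧
    IsLUB {x : ℝ | ∃ K : Set (List A), IsRegularLang K ∧
        K ⊆ {w : List A | Primitive w} ∧ HasCesaroDensity K x} 0 := by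
  have hinf : ∀ L : Set (List A), IsRegularLang L → (∃ α : ℝ, HasCesaroDensity L α ∧ 0 < α) →
      {w : List A | w ∈ L ∧ ¬ Primitive w}.Infinite := by
    rintro L hL ⟨α, hLα, hα⟩
    obtain ⟨u, hu, m, hm, hpow⟩ := hL.exists_flatten_replicate_mem hLα hα
    exact infinite_setOf_not_primitive hu hm hpow
  refine ⟨hinf, IsGreatest.isLUB
    ⟨⟨∅, isRegularLang_empty, empty_subset _, hasCesaroDensity_empty⟩, ?_⟩⟩
  rintro x ⟨K, hK, hKQ, hKx⟩
  by_contra! hx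
  exact hinf K hK ⟨x, hKx, hx⟩ (finite_empty.subset fun w hw => hw.2 (hKQ hw.1))

/-- Every regular language of positive (Cesàro) density contains infinitely
many non-primitive words; consequently the `REG`-lower-density of the set of
primitive words is `0`. -/
theorem stmt19 {A : Type*} [Fintype A] (hA : 2 ≤ Fintype.card A) :
    (∀ L : Set (List A), IsRegularLang L →
      (∃ α : ℝ, HasCesaroDensity L α ∧ 0 < α) →
      {w : List A | w ∈ L ∧ ¬ Primitive w}.Infinite) ∧
    IsLUB {x : ℝ | ∃ K : Set (List A), IsRegularLang K ∧
        K ⊆ {w : List A | Primitive w} ∧ HasCesaroDensity K x} 0 :=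
  stmt19_general
end
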